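/- arXiv:2101.10115 — 5 statements merged into one kernel-verified Lean document; each statement's English description precedes it below -/
import Mathlib

section
/- Let D be a moderate deviation function on a closed interval I = [a,b] (a < b), let ι be a nonempty finite index set, and define M_D(x) = ½(sup{y ∈ I : Σ_{i∈ι} D(x_i, y) < 0} + inf{y ∈ I : Σ_{i∈ι} D(x_i, y) > 0}) for x : ι → I, where suprema and infima are taken in I. Then M_D is nondecreasing: if x, x' : ι → I satisfy x_i ≤ x'_i for every i ∈ ι, then M_D(x) ≤ M_D(x'). -/
/-- The deviation-based aggregation `M_D` on the interval `[a,b]`: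
`M_D(x) = ½ (sup {y ∈ I | ∑ i, D (x i) y < 0} + inf {y ∈ I | ∑ i, D (x i) y > 0})`,
where the supremum and infimum are taken in `I = [a,b]`: inserting `a`
(resp. `b`) realizes the convention that the supremum of the empty set is `a`
and the infimum of the empty set is `b` (for nonempty subsets of `[a,b]` the
inserted endpoint does not affect the value). -/
noncomputable def devAgg (a b : ℝ) (D : ℝ → ℝ → ℝ) {ι : Type*} [Fintype ι]
    (x : ι → ℝ) : ℝ :=
  (sSup (insert a {y ∈ Set.Icc a b | ∑ i, D (x i) y < 0}) +
    sInf (insert b {y ∈ Set.Icc a b | 0 < ∑ i, D (x i) y})) / 2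

/-- For a moderate deviation function `D` on `I = [a,b]` and a
nonempty finite index set `ι`, the aggregation `M_D` is nondecreasing:
if `x i ≤ x' i` for every `i`, then `M_D(x) ≤ M_D(x')`. -/
theorem devAgg_monotone
    (a b : ℝ) (hab : a < b) (D : ℝ → ℝ → ℝ)
    (hD1 : ∀ x ∈ Set.Icc a b, MonotoneOn (fun y => D x y) (Set.Icc a b))
    (hD2 : ∀ y ∈ Set.Icc a b, AntitoneOn (fun x => D x y) (Set.Icc a b))
    (hD3 : ∀ x ∈ Set.Icc a b, ∀ y ∈ Set.Icc a b, (D x y = 0 ↔ x = y))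
    {ι : Type*} [Fintype ι] [Nonempty ι]
    (x x' : ι → ℝ) (hx : ∀ i, x i ∈ Set.Icc a b) (hx' : ∀ i, x' i ∈ Set.Icc a b)
    (hle : ∀ i, x i ≤ x' i) :
    devAgg a b D x ≤ devAgg a b D x' := by
  have hsum : ∀ y ∈ Set.Icc a b, ∑ i, D (x' i) y ≤ ∑ i, D (x i) y := by
    intro y hy
    exact Finset.sum_le_sum fun i _ => hD2 y hy (hx i) (hx' i) (hle i)
  have hsub1 : insert a {y ∈ Set.Icc a b | ∑ i, D (x i) y < 0} ⊆
      insert a {y ∈ Set.Icc a b | ∑ i, D (x' i) y < 0} := by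
    intro y hy
    rcases hy with hy | ⟨hy1, hy2⟩
    · exact Or.inl hy
    · exact Or.inr ⟨hy1, lt_of_le_of_lt (hsum y hy1) hy2⟩
  have hsub2 : insert b {y ∈ Set.Icc a b | 0 < ∑ i, D (x' i) y} ⊆
      insert b {y ∈ Set.Icc a b | 0 < ∑ i, D (x i) y} := by
    intro y hy
    rcases hy with hy | ⟨hy1, hy2⟩
    · exact Or.inl hy
    · exact Or.inr ⟨hy1, lt_of_lt_of_le hy2 (hsum y hy1)⟩
  have hbdd1 : BddAbove (insert a {y ∈ Set.Icc a b | ∑ i, D (x' i) y < 0}) := by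
    refine ⟨b, ?_⟩
    rintro y (rfl | ⟨hy1, _⟩)
    · exact hab.le
    · exact hy1.2
  have hbdd2 : BddBelow (insert b {y ∈ Set.Icc a b | 0 < ∑ i, D (x i) y}) := by
    refine ⟨a, ?_⟩
    rintro y (rfl | ⟨hy1, _⟩)
    · exact hab.le
    · exact hy1.1
  have h1 := csSup_le_csSup hbdd1 (Set.insert_nonempty _ _) hsub1
  have h2 := csInf_le_csInf hbdd2 (Set.insert_nonempty _ _) hsub2
  unfold devAgg
  linarith
end

section
/- Let D be a moderate deviation function on a closed interval I = [a,b] (a < b), let ι be a nonempty finite index set, and define M_D(x) = ½(sup{y ∈ I : Σ_{i∈ι} D(x_i, y) < 0} + inf{y ∈ I : Σ_{i∈ι} D(x_i, y) > 0}) for x : ι → I, where suprema and infima are taken in I. Then M_D is averaging: for every x : ι → I, min_{i∈ι} x_i ≤ M_D(x) ≤ max_{i∈ι} x_i; in particular M_D(x) ∈ I. -/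
/-- For a moderate deviation function `D` on `I = [a,b]` and a
nonempty finite index set `ι`, the aggregation `M_D` is averaging:
`min_i x_i ≤ M_D(x) ≤ max_i x_i`; in particular `M_D(x) ∈ I`. -/
theorem devAgg_averaging
    (a b : ℝ) (hab : a < b) (D : ℝ → ℝ → ℝ)
    (hD1 : ∀ x ∈ Set.Icc a b, MonotoneOn (fun y => D x y) (Set.Icc a b))
    (hD2 : ∀ y ∈ Set.Icc a b, AntitoneOn (fun x => D x y) (Set.Icc a b))
    (hD3 : ∀ x ∈ Set.Icc a b, ∀ y ∈ Set.Icc a b, (D x y = 0 ↔ x = y))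
    {ι : Type*} [Fintype ι] [Nonempty ι]
    (x : ι → ℝ) (hx : ∀ i, x i ∈ Set.Icc a b) :
    Finset.univ.inf' Finset.univ_nonempty x ≤ devAgg a b D x ∧
    devAgg a b D x ≤ Finset.univ.sup' Finset.univ_nonempty x ∧
    devAgg a b D x ∈ Set.Icc a b := by
  set m := Finset.univ.inf' Finset.univ_nonempty x with hm
  set M := Finset.univ.sup' Finset.univ_nonempty x with hMdef
  have ham : a ≤ m := Finset.le_inf' _ _ fun i _ => (hx i).1
  have hMb : M ≤ b := Finset.sup'_le _ _ fun i _ => (hx i).2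
  have hmx : ∀ i, m ≤ x i := fun i => Finset.inf'_le _ (Finset.mem_univ i)
  have hxM : ∀ i, x i ≤ M := fun i => Finset.le_sup' _ (Finset.mem_univ i)
  have hmM : m ≤ M := (hmx (Classical.arbitrary ι)).trans (hxM _)
  set S := insert a {y ∈ Set.Icc a b | ∑ i, D (x i) y < 0} with hSdef
  set T := insert b {y ∈ Set.Icc a b | 0 < ∑ i, D (x i) y} with hTdef
  have hSne : S.Nonempty := ⟨a, Set.mem_insert _ _⟩
  have hTne : T.Nonempty := ⟨b, Set.mem_insert _ _⟩
  have hSub : ∀ y ∈ S, y ≤ M := by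
    intro y hy
    rcases hy with rfl | ⟨hyI, hys⟩
    · exact ham.trans hmM
    · by_contra hyM
      push_neg at hyM
      have hnn : (0:ℝ) ≤ ∑ i, D (x i) y := by
        refine Finset.sum_nonneg fun i _ => ?_
        have h0 : D (x i) (x i) = 0 := (hD3 (x i) (hx i) (x i) (hx i)).mpr rfl
        have hle := hD1 (x i) (hx i) (hx i) hyI ((hxM i).trans hyM.le)
        simpa [h0] using hle
      linarith
  have hTlb : ∀ y ∈ T, m ≤ y := by
    intro y hy
    rcases hy with rfl | ⟨hyI, hys⟩
    · exact hmM.trans hMb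
    · by_contra hym
      push_neg at hym
      have hnp : ∑ i, D (x i) y ≤ 0 := by
        refine Finset.sum_nonpos fun i _ => ?_
        have h0 : D (x i) (x i) = 0 := (hD3 (x i) (hx i) (x i) (hx i)).mpr rfl
        have hle := hD1 (x i) (hx i) hyI (hx i) (hym.le.trans (hmx i))
        simpa [h0] using hle
      linarith
  have hbddS : BddAbove S := ⟨M, fun y hy => hSub y hy⟩
  have hbddT : BddBelow T := ⟨m, fun y hy => hTlb y hy⟩
  have hsupS_le : sSup S ≤ M := csSup_le hSne hSub
  have hm_infT : m ≤ sInf T := le_csInf hTne hTlb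
  have hm_supS : m ≤ sSup S := by
    rcases eq_or_lt_of_le ham with h | h
    · rw [← h]; exact le_csSup hbddS (Set.mem_insert _ _)
    · have hsub : Set.Ico a m ⊆ S := by
        intro y hy
        have hyI : y ∈ Set.Icc a b := ⟨hy.1, hy.2.le.trans (hmM.trans hMb)⟩
        refine Set.mem_insert_of_mem _ ⟨hyI, ?_⟩
        refine Finset.sum_neg (fun i _ => ?_) Finset.univ_nonempty
        have h0 : D (x i) (x i) = 0 := (hD3 (x i) (hx i) (x i) (hx i)).mpr rfl
        have hle := hD1 (x i) (hx i) hyI (hx i) ((hy.2.le).trans (hmx i))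
        have hne : D (x i) y ≠ 0 := fun hc =>
          absurd ((hD3 (x i) (hx i) y hyI).mp hc)
            (ne_of_gt (lt_of_lt_of_le hy.2 (hmx i)))
        have : D (x i) y ≤ 0 := by simpa [h0] using hle
        exact lt_of_le_of_ne this hne
      calc m = sSup (Set.Ico a m) := (csSup_Ico h).symm
        _ ≤ sSup S := csSup_le_csSup hbddS ⟨a, Set.left_mem_Ico.mpr h⟩ hsub
  have hinfT_le : sInf T ≤ M := by
    rcases eq_or_lt_of_le hMb with h | h
    · rw [h]; exact csInf_le hbddT (Set.mem_insert _ _)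
    · have hsub : Set.Ioc M b ⊆ T := by
        intro y hy
        have hyI : y ∈ Set.Icc a b := ⟨(ham.trans (hmM.trans hy.1.le)), hy.2⟩
        refine Set.mem_insert_of_mem _ ⟨hyI, ?_⟩
        refine Finset.sum_pos (fun i _ => ?_) Finset.univ_nonempty
        have h0 : D (x i) (x i) = 0 := (hD3 (x i) (hx i) (x i) (hx i)).mpr rfl
        have hle := hD1 (x i) (hx i) (hx i) hyI ((hxM i).trans hy.1.le)
        have hne : D (x i) y ≠ 0 := fun hc =>
          absurd ((hD3 (x i) (hx i) y hyI).mp hc)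
            (ne_of_lt (lt_of_le_of_lt (hxM i) hy.1))
        have : 0 ≤ D (x i) y := by simpa [h0] using hle
        exact lt_of_le_of_ne this (Ne.symm hne)
      calc sInf T ≤ sInf (Set.Ioc M b) :=
            csInf_le_csInf hbddT ⟨b, Set.right_mem_Ioc.mpr h⟩ hsub
        _ = M := csInf_Ioc h
  have hd : devAgg a b D x = (sSup S + sInf T) / 2 := rfl
  refine ⟨?_, ?_, ?_⟩
  · rw [hd]; linarith
  · rw [hd]; linarith
  · constructor <;> rw [hd] <;> linarith
end

section
/- Let r be a positive integer, w > 0, and let b : Fin r × Fin r → ℝ be an r × r matrix of nonnegative real numbers. Then the limit as ε → +∞ of M_{D_ε,w}(B) = (Σ_{i,j} w · b_{ij}(b_{ij} + ε)) / (r² w ε + Σ_{i,j} w · b_{ij}) exists and equals the arithmetic mean (Σ_{i,j} b_{ij}) / r². -/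
/-- For a positive integer `r`, a weight `w > 0`, and an `r × r`
matrix `b` of nonnegative reals, the weighted deviation-based matrix aggregation
`M_{D_ε,w}(B) = (∑ w·b(b+ε)) / (r²wε + ∑ w·b)` tends, as `ε → +∞`, to the
arithmetic mean `(∑ b) / r²`. -/
theorem weighted_matrix_aggregation_limit
    (r : ℕ) (hr : 0 < r) (w : ℝ) (hw : 0 < w)
    (b : Fin r × Fin r → ℝ) (hb : ∀ p, 0 ≤ b p) :
    Filter.Tendsto
      (fun ε : ℝ => (∑ p : Fin r × Fin r, w * (b p * (b p + ε))) /
        ((r : ℝ) ^ 2 * w * ε + ∑ p : Fin r × Fin r, w * b p))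
      Filter.atTop
      (nhds ((∑ p : Fin r × Fin r, b p) / (r : ℝ) ^ 2)) := by
  set S1 : ℝ := ∑ p : Fin r × Fin r, b p with hS1def
  set C : ℝ := ∑ p : Fin r × Fin r, w * (b p * b p) with hCdef
  have hS1 : (0:ℝ) ≤ S1 := Finset.sum_nonneg fun p _ => hb p
  have hrw : (0:ℝ) < (r:ℝ)^2 * w := by positivity
  have hwS1 : ∑ p : Fin r × Fin r, w * b p = w * S1 := by
    rw [hS1def, Finset.mul_sum]
  have h1 : Filter.Tendsto (fun ε : ℝ => ε⁻¹) Filter.atTop (nhds 0) :=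
    tendsto_inv_atTop_zero
  have hnum : Filter.Tendsto (fun ε : ℝ => C * ε⁻¹ + w * S1) Filter.atTop
      (nhds (w * S1)) := by
    have := (h1.const_mul C).add_const (w * S1)
    simpa using this
  have hden : Filter.Tendsto (fun ε : ℝ => (r:ℝ)^2 * w + w * S1 * ε⁻¹) Filter.atTop
      (nhds ((r:ℝ)^2 * w)) := by
    have := (h1.const_mul (w * S1)).const_add ((r:ℝ)^2 * w)
    simpa using this
  have key : Filter.Tendsto (fun ε : ℝ => (C * ε⁻¹ + w * S1) / ((r:ℝ)^2 * w + w * S1 * ε⁻¹))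
      Filter.atTop (nhds (S1 / (r:ℝ)^2)) := by
    have := hnum.div hden (ne_of_gt hrw)
    have heq : w * S1 / ((r:ℝ)^2 * w) = S1 / (r:ℝ)^2 := by
      field_simp
    rwa [heq] at this
  refine key.congr' ?_
  filter_upwards [Filter.eventually_gt_atTop (0:ℝ)] with ε hε
  have hε' : ε ≠ 0 := ne_of_gt hε
  have hsum : ∑ p : Fin r × Fin r, w * (b p * (b p + ε)) = C + w * S1 * ε := by
    rw [hCdef, hS1def, Finset.mul_sum, Finset.sum_mul, ← Finset.sum_add_distrib]
    exact Finset.sum_congr rfl fun p _ => by ring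
  rw [hwS1, hsum]
  rw [div_eq_div_iff]
  · field_simp
    try ring
  · have : (0:ℝ) < (r:ℝ)^2 * w + w * S1 * ε⁻¹ := by positivity
    exact ne_of_gt this
  · have : (0:ℝ) < (r:ℝ)^2 * w * ε + w * S1 := by positivity
    exact ne_of_gt this
end

section
/- Let n be a positive integer and ε ≥ 1. Then the function M : [0,1]^n → ℝ defined by M(x) = (Σ_k x_k(x_k + ε)) / (n ε + Σ_k x_k) is nondecreasing in each argument: if x, x' ∈ [0,1]^n satisfy x_k ≤ x'_k for every k, then M(x) ≤ M(x'). -/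
/-- One-coordinate monotonicity step. -/
lemma Daroczy_step (n : ℕ) (ε : ℝ) (hε : 1 ≤ ε)
    (y : Fin n → ℝ) (hy : ∀ j, y j ∈ Set.Icc (0:ℝ) 1)
    (k : Fin n) (t s : ℝ) (ht0 : 0 ≤ t) (hs1 : s ≤ 1) (hts : t ≤ s) :
    (∑ j, Function.update y k t j * (Function.update y k t j + ε)) /
      ((n : ℝ) * ε + ∑ j, Function.update y k t j) ≤
    (∑ j, Function.update y k s j * (Function.update y k s j + ε)) /
      ((n : ℝ) * ε + ∑ j, Function.update y k s j) := by
  have hn : (1:ℝ) ≤ n := by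
    have := k.pos
    exact_mod_cast this
  set S : ℝ := ∑ j ∈ Finset.univ.erase k, y j * (y j + ε) with hSdef
  set T : ℝ := ∑ j ∈ Finset.univ.erase k, y j with hTdef
  have hsum1 : ∀ u : ℝ,
      (∑ j, Function.update y k u j * (Function.update y k u j + ε))
        = u * (u + ε) + S := by
    intro u
    rw [← Finset.add_sum_erase _ _ (Finset.mem_univ k)]
    congr 1
    · simp
    · exact Finset.sum_congr rfl fun j hj => by
        rw [Function.update_of_ne (Finset.ne_of_mem_erase hj)]
  have hsum2 : ∀ u : ℝ,
      (∑ j, Function.update y k u j) = u + T := by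
    intro u
    rw [← Finset.add_sum_erase _ _ (Finset.mem_univ k)]
    congr 1
    · simp
    · exact Finset.sum_congr rfl fun j hj => by
        rw [Function.update_of_ne (Finset.ne_of_mem_erase hj)]
  rw [hsum1, hsum1, hsum2, hsum2]
  have hT0 : 0 ≤ T := Finset.sum_nonneg fun j _ => (hy j).1
  have hS0 : 0 ≤ S := Finset.sum_nonneg fun j _ =>
    mul_nonneg (hy j).1 (by linarith [(hy j).1])
  have hTn : T ≤ (n : ℝ) := by
    calc T ≤ ∑ j, y j :=
            Finset.sum_le_sum_of_subset_of_nonneg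
              (Finset.erase_subset _ _) (fun j _ _ => (hy j).1)
      _ ≤ ∑ _j : Fin n, (1:ℝ) := Finset.sum_le_sum fun j _ => (hy j).2
      _ = (n : ℝ) := by simp
  have hST : S ≤ (1 + ε) * T := by
    rw [hSdef, hTdef, Finset.mul_sum]
    refine Finset.sum_le_sum fun j _ => ?_
    have h1 := (hy j).1
    have h2 := (hy j).2
    nlinarith
  have ht1 : t ≤ 1 := le_trans hts hs1
  have hs0 : 0 ≤ s := le_trans ht0 hts
  have hC : 0 < (n : ℝ) * ε + T := by nlinarith
  have hd1 : 0 < (n : ℝ) * ε + (t + T) := by linarith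
  have hd2 : 0 < (n : ℝ) * ε + (s + T) := by linarith
  rw [div_le_div_iff₀ hd1 hd2]
  have hfac : 0 ≤ ((n:ℝ)*ε + T) * (s + t) + s * t + ε * ((n:ℝ)*ε + T) - S := by
    nlinarith
  nlinarith [mul_nonneg (sub_nonneg.2 hts) hfac]

/-- For `n ≥ 1` and `ε ≥ 1`, the function
`M(x) = (∑ x_k(x_k+ε)) / (nε + ∑ x_k)` on `[0,1]^n` is nondecreasing in each
argument: `x_k ≤ x'_k` for every `k` implies `M(x) ≤ M(x')`. -/
theorem Daroczy_mean_monotone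
    (n : ℕ) (hn : 0 < n) (ε : ℝ) (hε : 1 ≤ ε)
    (x x' : Fin n → ℝ) (hx : ∀ k, x k ∈ Set.Icc (0:ℝ) 1)
    (hx' : ∀ k, x' k ∈ Set.Icc (0:ℝ) 1) (hle : ∀ k, x k ≤ x' k) :
    (∑ k, x k * (x k + ε)) / ((n : ℝ) * ε + ∑ k, x k) ≤
      (∑ k, x' k * (x' k + ε)) / ((n : ℝ) * ε + ∑ k, x' k) := by
  set g : Finset (Fin n) → Fin n → ℝ :=
    fun A j => if j ∈ A then x' j else x j with hg
  have hgIcc : ∀ A j, g A j ∈ Set.Icc (0:ℝ) 1 := by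
    intro A j
    by_cases h : j ∈ A <;> simp [hg, h, hx j, hx' j]
  have key : ∀ A : Finset (Fin n),
      (∑ k, x k * (x k + ε)) / ((n : ℝ) * ε + ∑ k, x k) ≤
        (∑ k, g A k * (g A k + ε)) / ((n : ℝ) * ε + ∑ k, g A k) := by
    intro A
    induction A using Finset.induction_on with
    | empty => simp [hg]
    | @insert a A ha ih =>
      refine le_trans ih ?_
      have h1 : g (insert a A) = Function.update (g A) a (x' a) := by
        funext j
        by_cases h : j = a
        · subst h; simp [hg, Function.update_self]
        · simp [hg, Function.update_of_ne h, h]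
      have h2 : g A = Function.update (g A) a (x a) := by
        funext j
        by_cases h : j = a
        · subst h; simp [hg, Function.update_self, ha]
        · simp [Function.update_of_ne h]
      have hstep := Daroczy_step n ε hε (g A) (hgIcc A) a (x a) (x' a)
        (hx a).1 (hx' a).2 (hle a)
      rw [← h2, ← h1] at hstep
      exact hstep
  have := key Finset.univ
  simpa [hg] using this
end

section
/- Let n be a positive integer, ε ≥ 1, and let x : Fin n → [0,1]. Define D_ε(u,y) = (u + ε)(y − u). Then ½(sup{y ∈ [0,1] : Σ_k D_ε(x_k, y) < 0} + inf{y ∈ [0,1] : Σ_k D_ε(x_k, y) > 0}) = (Σ_k x_k(x_k + ε)) / (n ε + Σ_k x_k), where the supremum and infimum are taken in [0,1] (supremum of the empty set is 0, infimum of the empty set is 1); i.e., the deviation-based aggregation M_{D_ε} coincides with the explicit closed-form Daróczy mean of D_ε. -/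
/-- For `n ≥ 1`, `ε ≥ 1` and `x : Fin n → [0,1]`, the
deviation-based aggregation
`M_{D_ε}(x) = ½ (sup {y ∈ [0,1] | ∑ D_ε(x_k,y) < 0} + inf {y ∈ [0,1] | ∑ D_ε(x_k,y) > 0})`
(with sup/inf taken in `[0,1]`: inserting `0` (resp. `1`) realizes the
convention that the supremum of the empty set is `0` and the infimum of the
empty set is `1`) coincides with the closed-form Daróczy mean
`(∑ x_k(x_k+ε)) / (nε + ∑ x_k)`, where `D_ε(u,y) = (u+ε)(y−u)`. -/
theorem devAgg_eq_closed_form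
    (n : ℕ) (hn : 0 < n) (ε : ℝ) (hε : 1 ≤ ε)
    (x : Fin n → ℝ) (hx : ∀ k, x k ∈ Set.Icc (0:ℝ) 1) :
    (sSup (insert (0:ℝ)
        {y ∈ Set.Icc (0:ℝ) 1 | ∑ k, (x k + ε) * (y - x k) < 0}) +
      sInf (insert (1:ℝ)
        {y ∈ Set.Icc (0:ℝ) 1 | 0 < ∑ k, (x k + ε) * (y - x k)})) / 2 =
      (∑ k, x k * (x k + ε)) / ((n : ℝ) * ε + ∑ k, x k) := by
  set S : ℝ := (n : ℝ) * ε + ∑ k, x k with hSdef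
  set T : ℝ := ∑ k, x k * (x k + ε) with hTdef
  have hxk0 : ∀ k, (0:ℝ) ≤ x k := fun k => (hx k).1
  have hxk1 : ∀ k, x k ≤ (1:ℝ) := fun k => (hx k).2
  have hS0 : 0 < S := by
    have h1 : (0:ℝ) < (n : ℝ) * ε := by
      have : (0:ℝ) < (n:ℝ) := by exact_mod_cast hn
      nlinarith
    have h2 : (0:ℝ) ≤ ∑ k, x k := Finset.sum_nonneg fun k _ => hxk0 k
    linarith
  have hT0 : 0 ≤ T := Finset.sum_nonneg fun k _ => by nlinarith [hxk0 k, hxk1 k]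
  have hTS : T ≤ S := by
    have : T ≤ ∑ k, (x k + ε) := Finset.sum_le_sum fun k _ => by nlinarith [hxk0 k, hxk1 k]
    have hsum : ∑ k, (x k + ε) = S := by
      rw [Finset.sum_add_distrib, Finset.sum_const, Finset.card_univ, Fintype.card_fin,
        nsmul_eq_mul, hSdef]
      ring
    linarith [hsum ▸ this]
  set m : ℝ := T / S with hmdef
  have hm0 : 0 ≤ m := div_nonneg hT0 hS0.le
  have hm1 : m ≤ 1 := (div_le_one hS0).mpr hTS
  have hsum : ∀ y : ℝ, ∑ k, (x k + ε) * (y - x k) = S * y - T := by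
    intro y
    have : ∑ k, (x k + ε) * (y - x k) = (∑ k, (x k + ε)) * y - ∑ k, x k * (x k + ε) := by
      rw [Finset.sum_mul, ← Finset.sum_sub_distrib]
      exact Finset.sum_congr rfl fun k _ => by ring
    rw [this]
    congr 1
    rw [Finset.sum_add_distrib, Finset.sum_const, Finset.card_univ, Fintype.card_fin,
      nsmul_eq_mul, hSdef]
    ring
  have hlt : ∀ y : ℝ, (∑ k, (x k + ε) * (y - x k) < 0) ↔ y < m := by
    intro y
    rw [hsum y, hmdef, lt_div_iff₀ hS0]
    constructor <;> intro h <;> nlinarith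
  have hgt : ∀ y : ℝ, (0 < ∑ k, (x k + ε) * (y - x k)) ↔ m < y := by
    intro y
    rw [hsum y, hmdef, div_lt_iff₀ hS0]
    constructor <;> intro h <;> nlinarith
  have hset1 : {y ∈ Set.Icc (0:ℝ) 1 | ∑ k, (x k + ε) * (y - x k) < 0} = Set.Ico 0 m := by
    ext y
    simp only [Set.mem_setOf_eq, Set.mem_Icc, Set.mem_Ico, hlt y]
    constructor
    · rintro ⟨⟨h1, _⟩, h3⟩; exact ⟨h1, h3⟩
    · rintro ⟨h1, h2⟩; exact ⟨⟨h1, le_trans h2.le hm1⟩, h2⟩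
  have hset2 : {y ∈ Set.Icc (0:ℝ) 1 | 0 < ∑ k, (x k + ε) * (y - x k)} = Set.Ioc m 1 := by
    ext y
    simp only [Set.mem_setOf_eq, Set.mem_Icc, Set.mem_Ioc, hgt y]
    constructor
    · rintro ⟨⟨_, h2⟩, h3⟩; exact ⟨h3, h2⟩
    · rintro ⟨h1, h2⟩; exact ⟨⟨le_trans hm0 h1.le, h2⟩, h1⟩
  rw [hset1, hset2]
  have hSup : sSup (insert (0:ℝ) (Set.Ico 0 m)) = m := by
    rcases eq_or_lt_of_le hm0 with h | h
    · rw [← h]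
      simp
    · rw [Set.insert_eq_self.mpr (Set.mem_Ico.mpr ⟨le_refl 0, h⟩)]
      exact csSup_Ico h
  have hInf : sInf (insert (1:ℝ) (Set.Ioc m 1)) = m := by
    rcases eq_or_lt_of_le hm1 with h | h
    · rw [h]
      simp
    · rw [Set.insert_eq_self.mpr (Set.mem_Ioc.mpr ⟨h, le_refl 1⟩)]
      exact csInf_Ioc h
  rw [hSup, hInf, hmdef]
  ring
end
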